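/- arXiv:math/0508028 — 13 statements merged into one kernel-verified Lean document; each statement's English description precedes it below -/
import Mathlib

section
/- Let 𝔄 be a subalgebra of an associative algebra 𝔅, let σ : 𝔄 → 𝔅 be a linear map, and let d : 𝔄 → 𝔅 be a σ-derivation. Then for all a, b, c ∈ 𝔄 one has d(c)(σ(ab) − σ(a)σ(b)) = (σ(ca) − σ(c)σ(a))d(b). -/
/-- **Lemma 2.2.** If `𝔄` is a (non-unital) subalgebra of an associative algebra `𝔅`
over a field `K`, `σ : 𝔄 → 𝔅` is linear and `d : 𝔄 → 𝔅` is a `σ`-derivation, then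
`d(c)(σ(ab) − σ(a)σ(b)) = (σ(ca) − σ(c)σ(a)) d(b)` for all `a b c ∈ 𝔄`. -/
theorem stmt_0 {K B : Type*} [Field K] [NonUnitalRing B] [Module K B]
    [SMulCommClass K B B] [IsScalarTower K B B]
    (𝔄 : NonUnitalSubalgebra K B)
    (σ d : 𝔄 →ₗ[K] B)
    (hd : ∀ a b : 𝔄, d (a * b) = d a * σ b + σ a * d b)
    (a b c : 𝔄) :
    d c * (σ (a * b) - σ a * σ b) = (σ (c * a) - σ c * σ a) * d b := by
  have h1 := hd c (a * b)
  have h2 := hd (c * a) b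
  rw [hd a b] at h1
  rw [hd c a] at h2
  rw [mul_assoc] at h2
  rw [h1] at h2
  rw [mul_sub, sub_mul]
  linear_combination (norm := noncomm_ring) h2
end

section
/- Let 𝔄 and 𝔅 be normed algebras, let σ : 𝔄 → 𝔅 be a continuous linear map, and let d : 𝔄 → 𝔅 be a σ-derivation. Then for each a in the separating space 𝔖(d) and all b, c ∈ 𝔄 one has a(σ(bc) − σ(b)σ(c)) = 0. -/
open Filter Topology

/-- The separating space `𝔖(T)` of a linear map `T` between normed spaces: all `z`
for which there is a sequence `yₙ → 0` with `T yₙ → z`. -/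
def separatingSpace {A B : Type*} [NonUnitalNormedRing A] [NonUnitalNormedRing B]
    [NormedSpace ℂ A] [NormedSpace ℂ B] (T : A →ₗ[ℂ] B) : Set B :=
  {z | ∃ y : ℕ → A, Tendsto y atTop (𝓝 0) ∧ Tendsto (fun n => T (y n)) atTop (𝓝 z)}

/-! If `yₙ → 0` and `d yₙ → a`, then `d (yₙ b) = d yₙ σ b + σ yₙ d b → a σ b`, because
`σ yₙ → 0`. Applying this once to `yₙ (bc)` and twice to `(yₙ b) c` computes the limit of the
same sequence in two ways, so `a σ(bc) = a σ(b) σ(c)`. -/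

theorem tendsto_sigmaDerivation_mul_const {ι A B : Type*} [NonUnitalNonAssocSemiring A]
    [NonUnitalNonAssocSemiring B] [TopologicalSpace A] [TopologicalSpace B] [ContinuousAdd B]
    [ContinuousMul B] {σ d : A → B} (hσ : Tendsto σ (𝓝 0) (𝓝 0))
    (hd : ∀ x y : A, d (x * y) = d x * σ y + σ x * d y)
    {l : Filter ι} {y : ι → A} {a : B} (hy : Tendsto y l (𝓝 0))
    (hdy : Tendsto (fun n => d (y n)) l (𝓝 a)) (b : A) :
    Tendsto (fun n => d (y n * b)) l (𝓝 (a * σ b)) := by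
  have hσy : Tendsto (fun n => σ (y n)) l (𝓝 0) := hσ.comp hy
  simpa only [hd, zero_mul, add_zero] using (hdy.mul_const (σ b)).add (hσy.mul_const (d b))

/-- **Lemma 2.3.** If `𝔄`, `𝔅` are normed algebras, `σ : 𝔄 → 𝔅` is a continuous linear
map and `d : 𝔄 → 𝔅` is a `σ`-derivation, then every `a ∈ 𝔖(d)` satisfies
`a (σ(bc) − σ(b)σ(c)) = 0` for all `b c ∈ 𝔄`. -/
theorem stmt_1 {A B : Type*} [NonUnitalNormedRing A] [NonUnitalNormedRing B]
    [NormedSpace ℂ A] [NormedSpace ℂ B]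
    (σ d : A →ₗ[ℂ] B) (hσ : Continuous σ)
    (hd : ∀ x y : A, d (x * y) = d x * σ y + σ x * d y)
    (a : B) (ha : a ∈ separatingSpace d) (b c : A) :
    a * (σ (b * c) - σ b * σ c) = 0 := by
  obtain ⟨y, hy, hdy⟩ := ha
  have hσ0 : Tendsto σ (𝓝 0) (𝓝 0) := by simpa using hσ.tendsto 0
  have hyb : Tendsto (fun n => y n * b) atTop (𝓝 0) := by simpa using hy.mul_const b
  have h_assoc : Tendsto (fun n => d (y n * b * c)) atTop (𝓝 (a * σ b * σ c)) :=
    tendsto_sigmaDerivation_mul_const hσ0 hd hyb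
      (tendsto_sigmaDerivation_mul_const hσ0 hd hy hdy b) c
  have h_direct : Tendsto (fun n => d (y n * b * c)) atTop (𝓝 (a * σ (b * c))) := by
    simpa only [mul_assoc] using tendsto_sigmaDerivation_mul_const hσ0 hd hy hdy (b * c)
  rw [mul_sub, tendsto_nhds_unique h_direct h_assoc, mul_assoc, sub_self]
end

section
/- Let 𝔄 and 𝔅 be Banach algebras, let σ : 𝔄 → 𝔅 be a continuous linear map, and let d : 𝔄 → 𝔅 be a σ-derivation. If the right annihilator of the separating space 𝔖(d) is {0} (i.e., the only x ∈ 𝔅 with ax = 0 for all a ∈ 𝔖(d) is x = 0), then σ is multiplicative: σ(bc) = σ(b)σ(c) for all b, c ∈ 𝔄. -/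
/-! If `yₙ → 0` and `d yₙ → a`, the σ-derivation rule and continuity of `σ` give
`d (yₙ x) → a σ(x)`. Computing the limit of `d (yₙ b c)` once as `d (yₙ (b c))` and once
as `d ((yₙ b) c)` yields `a σ(bc) = a σ(b) σ(c)` for every
`a ∈ 𝔖(d)`, so `σ(bc) - σ(b) σ(c)` lies in the right annihilator of `𝔖(d)`, which is `{0}`. -/

open Filter Topology

section SigmaDerivation

variable {R A B : Type*} [Semiring R] [NonUnitalRing A] [NonUnitalRing B] [Module R A]
  [Module R B] [TopologicalSpace A] [TopologicalSpace B] [ContinuousAdd B] [ContinuousMul B]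
  {σ d : A →ₗ[R] B}

theorem tendsto_derivation_mul_right (hσ : Continuous σ)
    (hd : ∀ x y : A, d (x * y) = d x * σ y + σ x * d y) {ι : Type*} {l : Filter ι}
    {y : ι → A} {a : B} (hy : Tendsto y l (𝓝 0)) (hdy : Tendsto (fun n => d (y n)) l (𝓝 a))
    (x : A) : Tendsto (fun n => d (y n * x)) l (𝓝 (a * σ x)) := by
  have hσy : Tendsto (fun n => σ (y n)) l (𝓝 0) := by
    simpa using (map_zero σ ▸ hσ.tendsto 0).comp hy
  simp only [hd]
  simpa using (hdy.mul_const (σ x)).add (hσy.mul_const (d x))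

end SigmaDerivation

theorem mul_map_mul_of_mem_separatingSpace {A B : Type*} [NonUnitalNormedRing A]
    [NonUnitalNormedRing B] [NormedSpace ℂ A] [NormedSpace ℂ B] {σ d : A →ₗ[ℂ] B}
    (hσ : Continuous σ) (hd : ∀ x y : A, d (x * y) = d x * σ y + σ x * d y) {a : B}
    (ha : a ∈ separatingSpace d) (b c : A) : a * σ (b * c) = a * σ b * σ c := by
  obtain ⟨y, hy, hdy⟩ := ha
  have hyb : Tendsto (fun n => y n * b) atTop (𝓝 0) := by simpa using hy.mul_const b
  have hdyb := tendsto_derivation_mul_right hσ hd hy hdy b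
  refine tendsto_nhds_unique (tendsto_derivation_mul_right hσ hd hy hdy (b * c)) ?_
  simpa only [mul_assoc] using tendsto_derivation_mul_right hσ hd hyb hdyb c

theorem stmt_2_general {A B : Type*} [NonUnitalNormedRing A] [NonUnitalNormedRing B]
    [NormedSpace ℂ A] [NormedSpace ℂ B]
    (σ d : A →ₗ[ℂ] B) (hσ : Continuous σ)
    (hd : ∀ x y : A, d (x * y) = d x * σ y + σ x * d y)
    (hran : ∀ x : B, (∀ a ∈ separatingSpace d, a * x = 0) → x = 0) :
    ∀ b c : A, σ (b * c) = σ b * σ c := by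
  intro b c
  rw [← sub_eq_zero]
  refine hran _ fun a ha => ?_
  rw [mul_sub, mul_map_mul_of_mem_separatingSpace hσ hd ha, mul_assoc, sub_self]

/-- **Remark 2.4 (first part).** If `𝔄`, `𝔅` are Banach algebras, `σ : 𝔄 → 𝔅` is a
continuous linear map, `d : 𝔄 → 𝔅` is a `σ`-derivation and the right annihilator of
`𝔖(d)` is `{0}`, then `σ` is multiplicative. -/
theorem stmt_2 {A B : Type*} [NonUnitalNormedRing A] [NonUnitalNormedRing B]
    [NormedSpace ℂ A] [NormedSpace ℂ B] [CompleteSpace A] [CompleteSpace B]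
    (σ d : A →ₗ[ℂ] B) (hσ : Continuous σ)
    (hd : ∀ x y : A, d (x * y) = d x * σ y + σ x * d y)
    (hran : ∀ x : B, (∀ a ∈ separatingSpace d, a * x = 0) → x = 0) :
    ∀ b c : A, σ (b * c) = σ b * σ c :=
  stmt_2_general σ d hσ hd hran
end

section
/- Let 𝔄 and 𝔅 be Banach algebras, let σ : 𝔄 → 𝔅 be a continuous linear map, and let d : 𝔄 → 𝔅 be a σ-derivation. If the left annihilator of the set {σ(bc) − σ(b)σ(c) : b, c ∈ 𝔄} is {0}, then d is continuous. -/
open Filter Topology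

/-- **Remark 2.4 (second part).** If `𝔄`, `𝔅` are Banach algebras, `σ : 𝔄 → 𝔅` is a
continuous linear map, `d : 𝔄 → 𝔅` is a `σ`-derivation and the left annihilator of
`{σ(bc) − σ(b)σ(c) : b, c ∈ 𝔄}` is `{0}`, then `d` is continuous. -/
theorem stmt_3 {A B : Type*} [NonUnitalNormedRing A] [NonUnitalNormedRing B]
    [NormedSpace ℂ A] [NormedSpace ℂ B] [CompleteSpace A] [CompleteSpace B]
    (σ d : A →ₗ[ℂ] B) (hσ : Continuous σ)
    (hd : ∀ x y : A, d (x * y) = d x * σ y + σ x * d y)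
    (hlan : ∀ x : B, (∀ b c : A, x * (σ (b * c) - σ b * σ c) = 0) → x = 0) :
    Continuous d := by
  have key : ∀ a b c : A, d a * (σ (b * c) - σ b * σ c)
      = σ a * (d b * σ c) + σ (a * b) * d c - σ a * d (b * c) := by
    intro a b c
    have assoc : d (a * (b * c)) = d (a * b * c) := by rw [mul_assoc]
    rw [hd a (b * c), hd (a * b) c, hd a b, add_mul, mul_assoc, mul_assoc] at assoc
    rw [mul_sub, eq_sub_of_add_eq assoc]
    abel
  apply d.continuous_of_seq_closed_graph
  intro u x y hu hy
  have hv : Tendsto (fun n => u n - x) atTop (𝓝 0) := by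
    simpa using hu.sub (tendsto_const_nhds (x := x))
  have hdv : Tendsto (fun n => d (u n - x)) atTop (𝓝 (y - d x)) := by
    simpa [map_sub] using hy.sub (tendsto_const_nhds (x := d x))
  have hsv : Tendsto (fun n => σ (u n - x)) atTop (𝓝 0) := by
    have := (hσ.tendsto 0).comp hv
    simpa only [Function.comp_def, map_zero] using this
  have h0 : y - d x = 0 := by
    apply hlan
    intro b c
    have hsvb : Tendsto (fun n => σ ((u n - x) * b)) atTop (𝓝 0) := by
      have h1 : Tendsto (fun n => (u n - x) * b) atTop (𝓝 0) := by
        simpa using hv.mul (tendsto_const_nhds (x := b))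
      have := (hσ.tendsto 0).comp h1
      simpa only [Function.comp_def, map_zero] using this
    have lim1 : Tendsto (fun n => d (u n - x) * (σ (b * c) - σ b * σ c)) atTop
        (𝓝 ((y - d x) * (σ (b * c) - σ b * σ c))) := hdv.mul tendsto_const_nhds
    have lim2 : Tendsto (fun n => σ (u n - x) * (d b * σ c) + σ ((u n - x) * b) * d c
        - σ (u n - x) * d (b * c)) atTop (𝓝 0) := by
      have := ((hsv.mul (tendsto_const_nhds (x := d b * σ c))).add
        (hsvb.mul (tendsto_const_nhds (x := d c)))).sub
        (hsv.mul (tendsto_const_nhds (x := d (b * c))))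
      simpa using this
    have : Tendsto (fun n => d (u n - x) * (σ (b * c) - σ b * σ c)) atTop (𝓝 0) := by
      simpa only [key] using lim2
    exact tendsto_nhds_unique lim1 this
  exact (sub_eq_zero.mp h0)
end

section
/- Let 𝔄 and 𝔅 be Banach algebras, let σ : 𝔄 → 𝔅 be a surjective continuous linear map, and let d : 𝔄 → 𝔅 be a σ-derivation. Then the separating space 𝔖(d) is a closed two-sided ideal of 𝔅. -/
open Filter Topology

/-!
`𝔖(d)` is the fibre over `0` of the closure of the graph of `d`, hence a closed subspace.
It absorbs products because `d (a yₙ) = d a σ(yₙ) + σ a d(yₙ)` with `σ(yₙ) → 0` by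
continuity of `σ`, so `σ a · 𝔖(d) ⊆ 𝔖(d)`, symmetrically on the right; surjectivity of
`σ` turns this into two-sided absorption by all of `𝔅`.
-/

section SeparatingSpace

variable {A B : Type*} [NonUnitalNormedRing A] [NonUnitalNormedRing B]
  [NormedSpace ℂ A] [NormedSpace ℂ B]

def separatingSubmodule (T : A →ₗ[ℂ] B) : Submodule ℂ B :=
  T.graph.topologicalClosure.comap (LinearMap.inr ℂ A B)

theorem coe_separatingSubmodule (T : A →ₗ[ℂ] B) :
    (separatingSubmodule T : Set B) = separatingSpace T := by
  ext z
  change ((0 : A), z) ∈ closure (T.graph : Set (A × B)) ↔ _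
  simp only [mem_closure_iff_seq_limit, SetLike.mem_coe, LinearMap.mem_graph_iff]
  constructor
  · rintro ⟨p, hp, hlim⟩
    exact ⟨fun n => (p n).1, hlim.fst_nhds, hlim.snd_nhds.congr hp⟩
  · rintro ⟨y, hy, hTy⟩
    exact ⟨fun n => (y n, T (y n)), fun n => rfl, hy.prodMk_nhds hTy⟩

theorem isClosed_separatingSpace (T : A →ₗ[ℂ] B) : IsClosed (separatingSpace T) := by
  rw [← coe_separatingSubmodule]
  exact T.graph.isClosed_topologicalClosure.preimage (continuous_const.prodMk continuous_id)

variable {σ d : A →ₗ[ℂ] B} (hσ : Continuous σ)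
  (hd : ∀ x y : A, d (x * y) = d x * σ y + σ x * d y)
include hσ hd

theorem map_mul_mem_separatingSpace {y : B} (hy : y ∈ separatingSpace d) (a : A) :
    σ a * y ∈ separatingSpace d := by
  obtain ⟨u, hu, hdu⟩ := hy
  have hσu : Tendsto (fun n => σ (u n)) atTop (𝓝 0) :=
    (hσ.tendsto' 0 0 (map_zero σ)).comp hu
  refine ⟨fun n => a * u n, by simpa using hu.const_mul a, ?_⟩
  simpa [hd] using (hσu.const_mul (d a)).add (hdu.const_mul (σ a))

theorem mul_map_mem_separatingSpace {y : B} (hy : y ∈ separatingSpace d) (a : A) :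
    y * σ a ∈ separatingSpace d := by
  obtain ⟨u, hu, hdu⟩ := hy
  have hσu : Tendsto (fun n => σ (u n)) atTop (𝓝 0) :=
    (hσ.tendsto' 0 0 (map_zero σ)).comp hu
  refine ⟨fun n => u n * a, by simpa using hu.mul_const a, ?_⟩
  simpa [hd] using (hdu.mul_const (σ a)).add (hσu.mul_const (d a))

end SeparatingSpace

theorem stmt_4_general {A B : Type*} [NonUnitalNormedRing A] [NonUnitalNormedRing B]
    [NormedSpace ℂ A] [NormedSpace ℂ B]
    (σ d : A →ₗ[ℂ] B) (hσ : Continuous σ) (hσsurj : Function.Surjective σ)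
    (hd : ∀ x y : A, d (x * y) = d x * σ y + σ x * d y) :
    IsClosed (separatingSpace d) ∧
      ∃ I : TwoSidedIdeal B, (I : Set B) = separatingSpace d := by
  refine ⟨isClosed_separatingSpace d, ?_⟩
  rw [← coe_separatingSubmodule]
  refine ⟨TwoSidedIdeal.mk' _ (separatingSubmodule d).zero_mem (separatingSubmodule d).add_mem
    (separatingSubmodule d).neg_mem ?_ ?_, TwoSidedIdeal.coe_mk' ..⟩
  · intro x y hy
    obtain ⟨a, rfl⟩ := hσsurj x
    rw [coe_separatingSubmodule] at hy ⊢
    exact map_mul_mem_separatingSpace hσ hd hy a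
  · intro x y hx
    obtain ⟨a, rfl⟩ := hσsurj y
    rw [coe_separatingSubmodule] at hx ⊢
    exact mul_map_mem_separatingSpace hσ hd hx a

/-- **From the proof of Proposition 2.5.** If `𝔄`, `𝔅` are Banach algebras,
`σ : 𝔄 → 𝔅` is a surjective continuous linear map and `d : 𝔄 → 𝔅` is a
`σ`-derivation, then `𝔖(d)` is a closed two-sided ideal of `𝔅`. -/
theorem stmt_4 {A B : Type*} [NonUnitalNormedRing A] [NonUnitalNormedRing B]
    [NormedSpace ℂ A] [NormedSpace ℂ B] [CompleteSpace A] [CompleteSpace B]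
    (σ d : A →ₗ[ℂ] B) (hσ : Continuous σ) (hσsurj : Function.Surjective σ)
    (hd : ∀ x y : A, d (x * y) = d x * σ y + σ x * d y) :
    IsClosed (separatingSpace d) ∧
      ∃ I : TwoSidedIdeal B, (I : Set B) = separatingSpace d :=
  stmt_4_general σ d hσ hσsurj hd
end

section
/- Let 𝔄 be a Banach algebra and let 𝔅 be a unital Banach algebra whose only closed two-sided ideals are {0} and 𝔅. Let σ : 𝔄 → 𝔅 be a surjective continuous linear map and let d : 𝔄 → 𝔅 be a σ-derivation. Then either d is continuous or σ is multiplicative (σ(bc) = σ(b)σ(c) for all b, c ∈ 𝔄). -/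
/-!
The separating space of `d`, i.e. the set of `y` with `(0, y)` in the closure of the graph of `d`,
is a closed subspace of `𝔅`, and since `σ` is continuous and surjective the σ-derivation rule
makes it a two-sided ideal. If it is `{0}`, the graph of `d` is closed and `d` is continuous by
the closed graph theorem. If it is all of `𝔅`, then `(0, 1)` lies in the closure of the graph.
The σ-derivation rule applied to `x(bc) = (xb)c` gives
`d x (σ(bc) - σ b σ c) = (σ(xb) - σ x σ b) d c`. Both sides are continuous functions of
`(x, d x)`, so the identity extends to the closure of the graph, and at `(0, 1)` it reads
`σ(bc) - σ b σ c = 0`.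
-/

namespace LinearMap

section SeparatingSpace

variable {𝕜 E F : Type*} [Ring 𝕜]
  [AddCommGroup E] [Module 𝕜 E] [TopologicalSpace E] [IsTopologicalAddGroup E]
  [ContinuousConstSMul 𝕜 E]
  [AddCommGroup F] [Module 𝕜 F] [TopologicalSpace F] [IsTopologicalAddGroup F]
  [ContinuousConstSMul 𝕜 F]

def separatingSpace (d : E →ₗ[𝕜] F) : Submodule 𝕜 F :=
  d.graph.topologicalClosure.comap (LinearMap.inr 𝕜 E F)

theorem mem_separatingSpace_iff {d : E →ₗ[𝕜] F} {y : F} :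
    y ∈ d.separatingSpace ↔ ((0 : E), y) ∈ closure (d.graph : Set (E × F)) := by
  rw [separatingSpace, Submodule.mem_comap, ← SetLike.mem_coe,
    Submodule.topologicalClosure_coe, inr_apply]

theorem isClosed_separatingSpace (d : E →ₗ[𝕜] F) : IsClosed (d.separatingSpace : Set F) :=
  d.graph.isClosed_topologicalClosure.preimage (continuous_const.prodMk continuous_id)

theorem isClosed_graph_of_separatingSpace_eq_bot {d : E →ₗ[𝕜] F}
    (h : d.separatingSpace = ⊥) : IsClosed (d.graph : Set (E × F)) := by
  refine isClosed_of_closure_subset fun p hp => ?_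
  have hp' : p ∈ d.graph.topologicalClosure := by
    rwa [← SetLike.mem_coe, Submodule.topologicalClosure_coe]
  have hsep : p.2 - d p.1 ∈ d.separatingSpace := by
    have hshift : ((0 : E), p.2 - d p.1) = p - (p.1, d p.1) := by ext <;> simp
    rw [separatingSpace, Submodule.mem_comap, inr_apply, hshift]
    exact sub_mem hp' (d.graph.le_topologicalClosure ((d.mem_graph_iff _).2 rfl))
  rw [h, Submodule.mem_bot, sub_eq_zero] at hsep
  exact (d.mem_graph_iff p).2 hsep

end SeparatingSpace

section SigmaDerivation

variable {𝕜 A B : Type*} [Semiring 𝕜] [NonUnitalRing A] [Module 𝕜 A]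
  [NonUnitalRing B] [Module 𝕜 B] {σ d : A →ₗ[𝕜] B}

theorem apply_mul_map_mul_sub (hd : ∀ x y : A, d (x * y) = d x * σ y + σ x * d y)
    (x b c : A) : d x * (σ (b * c) - σ b * σ c) = (σ (x * b) - σ x * σ b) * d c := by
  have hassoc : d x * σ (b * c) + σ x * (d b * σ c + σ b * d c)
      = (d x * σ b + σ x * d b) * σ c + σ (x * b) * d c := by
    rw [← hd x b, ← hd, ← hd, ← hd, mul_assoc]
  linear_combination (norm := noncomm_ring) hassoc

end SigmaDerivation

section SeparatingIdeal

variable {𝕜 A B : Type*} [Ring 𝕜]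
  [NonUnitalRing A] [Module 𝕜 A] [TopologicalSpace A] [IsTopologicalRing A]
  [ContinuousConstSMul 𝕜 A]
  [NonUnitalRing B] [Module 𝕜 B] [TopologicalSpace B] [IsTopologicalRing B]
  [ContinuousConstSMul 𝕜 B] {σ d : A →ₗ[𝕜] B}

theorem mul_mem_separatingSpace_of_left (hσ : Continuous σ)
    (hd : ∀ x y : A, d (x * y) = d x * σ y + σ x * d y) (a : A) {y : B}
    (hy : y ∈ d.separatingSpace) : σ a * y ∈ d.separatingSpace := by
  rw [mem_separatingSpace_iff] at hy ⊢
  have hmaps : Set.MapsTo (fun p : A × B => (a * p.1, d a * σ p.1 + σ a * p.2))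
      d.graph d.graph := by
    rintro ⟨x, _⟩ (rfl : _ = d x)
    exact (d.mem_graph_iff _).2 (hd a x).symm
  simpa using map_mem_closure (by fun_prop) hy hmaps

theorem mul_mem_separatingSpace_of_right (hσ : Continuous σ)
    (hd : ∀ x y : A, d (x * y) = d x * σ y + σ x * d y) (a : A) {y : B}
    (hy : y ∈ d.separatingSpace) : y * σ a ∈ d.separatingSpace := by
  rw [mem_separatingSpace_iff] at hy ⊢
  have hmaps : Set.MapsTo (fun p : A × B => (p.1 * a, p.2 * σ a + σ p.1 * d a))
      d.graph d.graph := by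
    rintro ⟨x, _⟩ (rfl : _ = d x)
    exact (d.mem_graph_iff _).2 (hd x a).symm
  simpa using map_mem_closure (by fun_prop) hy hmaps

def separatingIdeal (d : A →ₗ[𝕜] B) (hσ : Continuous σ) (hσsurj : Function.Surjective σ)
    (hd : ∀ x y : A, d (x * y) = d x * σ y + σ x * d y) : TwoSidedIdeal B :=
  .mk' d.separatingSpace (zero_mem _) add_mem neg_mem
    (fun {x _} hy => by
      obtain ⟨a, rfl⟩ := hσsurj x
      exact mul_mem_separatingSpace_of_left hσ hd a hy)
    (fun {_ y} hx => by
      obtain ⟨a, rfl⟩ := hσsurj y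
      exact mul_mem_separatingSpace_of_right hσ hd a hx)

theorem coe_separatingIdeal (d : A →ₗ[𝕜] B) (hσ : Continuous σ) (hσsurj : Function.Surjective σ)
    (hd : ∀ x y : A, d (x * y) = d x * σ y + σ x * d y) :
    (separatingIdeal d hσ hσsurj hd : Set B) = d.separatingSpace :=
  TwoSidedIdeal.coe_mk' _ _ _ _ _ _

end SeparatingIdeal

theorem map_mul_of_one_mem_separatingSpace {𝕜 A B : Type*} [Ring 𝕜]
    [NonUnitalRing A] [Module 𝕜 A] [TopologicalSpace A] [IsTopologicalRing A]
    [ContinuousConstSMul 𝕜 A]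
    [Ring B] [Module 𝕜 B] [TopologicalSpace B] [IsTopologicalRing B] [ContinuousConstSMul 𝕜 B]
    [T2Space B] {σ d : A →ₗ[𝕜] B} (hσ : Continuous σ)
    (hd : ∀ x y : A, d (x * y) = d x * σ y + σ x * d y) (h1 : 1 ∈ d.separatingSpace)
    (b c : A) : σ (b * c) = σ b * σ c := by
  have hgraph : Set.EqOn (fun p : A × B => p.2 * (σ (b * c) - σ b * σ c))
      (fun p => (σ (p.1 * b) - σ p.1 * σ b) * d c) d.graph := by
    rintro ⟨x, _⟩ (rfl : _ = d x)
    exact apply_mul_map_mul_sub hd x b c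
  simpa [sub_eq_zero] using
    hgraph.closure (by fun_prop) (by fun_prop) (mem_separatingSpace_iff.1 h1)

end LinearMap

/-- **Proposition 2.5.** Let `𝔄` be a Banach algebra, `𝔅` a unital Banach algebra
whose only closed two-sided ideals are `{0}` and `𝔅`, `σ : 𝔄 → 𝔅` a surjective
continuous linear map and `d : 𝔄 → 𝔅` a `σ`-derivation. Then `d` is continuous or
`σ` is multiplicative. -/
theorem stmt_5 {A B : Type*} [NonUnitalNormedRing A] [NormedSpace ℂ A]
    [CompleteSpace A] [NormedRing B] [NormedAlgebra ℂ B] [CompleteSpace B]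
    (hsimple : ∀ I : TwoSidedIdeal B, IsClosed (I : Set B) →
      (I : Set B) = {0} ∨ (I : Set B) = Set.univ)
    (σ d : A →ₗ[ℂ] B) (hσ : Continuous σ) (hσsurj : Function.Surjective σ)
    (hd : ∀ x y : A, d (x * y) = d x * σ y + σ x * d y) :
    Continuous d ∨ ∀ b c : A, σ (b * c) = σ b * σ c := by
  have hcoe := LinearMap.coe_separatingIdeal d hσ hσsurj hd
  rcases hsimple _ (hcoe ▸ d.isClosed_separatingSpace) with hbot | htop
  · rw [hcoe, ← Submodule.bot_coe (R := ℂ), SetLike.coe_set_eq] at hbot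
    exact .inl (d.continuous_of_isClosed_graph (d.isClosed_graph_of_separatingSpace_eq_bot hbot))
  · have h1 : (1 : B) ∈ d.separatingSpace := by
      rw [← SetLike.mem_coe, ← hcoe, htop]
      exact Set.mem_univ 1
    exact .inr (LinearMap.map_mul_of_one_mem_separatingSpace hσ hd h1)
end

section
/- Let H be a complex Hilbert space, 𝔄 a C*-algebra acting on H, σ : 𝔄 → B(H) a linear map, and d : 𝔄 → B(H) a continuous *-σ-derivation. Then there exists a continuous linear map Σ : 𝔄 → B(H) such that d is a *-Σ-derivation, i.e., d(AB) = d(A)Σ(B) + Σ(A)d(B) for all A, B ∈ 𝔄 and d(A*) = d(A)* for all A ∈ 𝔄. -/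
/-!
Let `K` be the closed span of the ranges of all `d A` and `P` the orthogonal projection onto `K`.
Since `d` commutes with `star`, every `d A` also vanishes on `Kᗮ`, so `P * d A = d A = d A * P`,
and the compression `Σ A = P * σ A * P` still satisfies the Leibniz rule. `Σ` is continuous by
the closed graph theorem: `Σ A * d B = d (A * B) - d A * Σ B` is continuous in `A`, so a graph
limit agrees with `Σ` on `K`, while both vanish on `Kᗮ`.
-/

section Compression

variable {R S : Type*} [Mul R] [NonUnitalSemiring S]

theorem leibniz_compress {d σ : R → S} {p : S}
    (hd : ∀ a b, d (a * b) = d a * σ b + σ a * d b)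
    (hdp : ∀ a, d a * p = d a) (hpd : ∀ a, p * d a = d a) (a b : R) :
    d (a * b) = d a * (p * σ b * p) + p * σ a * p * d b :=
  calc d (a * b) = p * d (a * b) * p := by rw [hpd, hdp]
    _ = (p * d a) * σ b * p + p * σ a * (d b * p) := by
      rw [hd]; simp only [mul_add, add_mul, mul_assoc]
    _ = (d a * p) * σ b * p + p * σ a * (p * d b) := by rw [hpd, hdp, hdp, hpd]
    _ = d a * (p * σ b * p) + p * σ a * p * d b := by simp only [mul_assoc]

end Compression

section EssentialSubspace

variable {𝕜 H ι : Type*} [RCLike 𝕜] [NormedAddCommGroup H] [InnerProductSpace 𝕜 H]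

def essentialSubspace (T : ι → H →L[𝕜] H) : Submodule 𝕜 H :=
  (Submodule.span 𝕜 (⋃ i, Set.range (T i))).topologicalClosure

variable (T : ι → H →L[𝕜] H)

theorem apply_mem_essentialSubspace (i : ι) (x : H) : T i x ∈ essentialSubspace T :=
  Submodule.le_topologicalClosure _ <| Submodule.subset_span <| Set.mem_iUnion_of_mem i ⟨x, rfl⟩

variable [CompleteSpace H]

instance : (essentialSubspace T).HasOrthogonalProjection := by
  unfold essentialSubspace
  infer_instance

theorem starProjection_essentialSubspace_mul (i : ι) :
    (essentialSubspace T).starProjection * T i = T i :=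
  ContinuousLinearMap.ext fun x ↦
    Submodule.starProjection_eq_self_iff.mpr (apply_mem_essentialSubspace T i x)

theorem mul_starProjection_essentialSubspace (hT : ∀ i, ∃ j, star (T i) = T j) (i : ι) :
    T i * (essentialSubspace T).starProjection = T i := by
  obtain ⟨j, hj⟩ := hT i
  apply star_injective
  rw [star_mul, (isSelfAdjoint_starProjection _).star_eq, hj,
    starProjection_essentialSubspace_mul]

theorem mul_starProjection_essentialSubspace_eq {A B : H →L[𝕜] H} (h : ∀ i, A * T i = B * T i) :
    A * (essentialSubspace T).starProjection = B * (essentialSubspace T).starProjection := by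
  have hEq : Set.EqOn A B (essentialSubspace T) := by
    refine ContinuousLinearMap.eqOn_closure_span ?_
    rintro _ ⟨_, ⟨i, rfl⟩, x, rfl⟩
    exact congr($(h i) x)
  ext x
  exact hEq (Submodule.starProjection_apply_mem _ x)

theorem continuous_of_continuous_mul_right {E : Type*} [NormedAddCommGroup E] [NormedSpace 𝕜 E]
    [CompleteSpace E] (Sig : E →ₗ[𝕜] H →L[𝕜] H)
    (hSig : ∀ x, Sig x * (essentialSubspace T).starProjection = Sig x)
    (hT : ∀ i, Continuous fun x ↦ Sig x * T i) : Continuous Sig := by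
  refine Sig.continuous_of_seq_closed_graph fun u x y hu hy ↦ ?_
  have hyT (i : ι) : y * T i = Sig x * T i :=
    tendsto_nhds_unique (hy.mul_const _) (((hT i).tendsto x).comp hu)
  have hyP : y * (essentialSubspace T).starProjection = y := by
    refine tendsto_nhds_unique ?_ hy
    simpa only [Function.comp_def, hSig] using hy.mul_const (essentialSubspace T).starProjection
  rw [← hyP, ← hSig x, mul_starProjection_essentialSubspace_eq T hyT]

end EssentialSubspace

/-- **Theorem 3.2.** Let `𝔄` be a C*-algebra acting on a Hilbert space `H`,
`σ : 𝔄 → B(H)` a linear map and `d : 𝔄 → B(H)` a continuous `*`-`σ`-derivation.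
Then there is a continuous linear map `Σ : 𝔄 → B(H)` such that `d` is a
`*`-`Σ`-derivation. -/
theorem stmt_7 {H : Type*} [NormedAddCommGroup H] [InnerProductSpace ℂ H]
    [CompleteSpace H]
    (𝔄 : NonUnitalStarSubalgebra ℂ (H →L[ℂ] H))
    (hcl : IsClosed (𝔄 : Set (H →L[ℂ] H)))
    (σ d : 𝔄 →ₗ[ℂ] (H →L[ℂ] H))
    (hd_cont : Continuous d)
    (hd : ∀ A B : 𝔄, d (A * B) = d A * σ B + σ A * d B)
    (hd_star : ∀ A : 𝔄, d (star A) = star (d A)) :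
    ∃ Sig : 𝔄 →ₗ[ℂ] (H →L[ℂ] H), Continuous Sig ∧
      (∀ A B : 𝔄, d (A * B) = d A * Sig B + Sig A * d B) ∧
      (∀ A : 𝔄, d (star A) = star (d A)) := by
  have : CompleteSpace 𝔄 := hcl.completeSpace_coe
  set P := (essentialSubspace ⇑d).starProjection
  let Sig : 𝔄 →ₗ[ℂ] (H →L[ℂ] H) := LinearMap.mulLeftRight ℂ (P, P) ∘ₗ σ
  have hSig : ∀ A B, d (A * B) = d A * Sig B + Sig A * d B :=
    leibniz_compress hd
      (mul_starProjection_essentialSubspace _ fun A ↦ ⟨star A, (hd_star A).symm⟩)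
      (starProjection_essentialSubspace_mul _)
  refine ⟨Sig, continuous_of_continuous_mul_right ⇑d Sig (fun A ↦ ?_) (fun B ↦ ?_), hSig, hd_star⟩
  · change P * σ A * P * P = P * σ A * P
    rw [mul_assoc, (Submodule.isIdempotentElem_starProjection _).eq]
  · have hSigd : (fun A ↦ Sig A * d B) = fun A ↦ d (A * B) - d A * Sig B := by
      funext A
      rw [hSig]
      abel
    rw [hSigd]
    fun_prop
end

section
/- Let H be a complex Hilbert space, 𝔄 a C*-algebra acting on H, σ : 𝔄 → B(H) a *-linear map, and d : 𝔄 → B(H) a continuous σ-derivation. Then there exists a continuous linear map Σ : 𝔄 → B(H) such that d is a Σ-derivation, i.e., d(AB) = d(A)Σ(B) + Σ(A)d(B) for all A, B ∈ 𝔄. -/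
/-!
Let `N` be the common kernel of the operators `d b` and `M` the closed span of their ranges,
with orthogonal projections `p` and `q`, and put `e = 1 - q`. Replacing `σ a` by
`Σ a = σ a - p σ(a) e` does not change the products `d b · σ a` and `σ a · d b`, since
`d b p = 0 = e d b`, so `d` is still a `Σ`-derivation. Continuity of `Σ` follows from the closed
graph theorem: if `aₙ → 0` and `Σ aₙ → T`, the derivation rule and continuity of `d` give
`T d b = 0 = d b T` for all `b`, i.e. `T = T e` and `T = p T`; and `p Σ(aₙ) e = 0` gives
`p T e = 0`. Hence `T = p T e = 0`.
-/

open Filter Topology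

section Algebra

variable {𝕜 A R : Type*} [CommSemiring 𝕜] [NonUnitalRing A] [Module 𝕜 A] [Ring R] [Algebra 𝕜 R]

def IsSigmaDerivation (σ d : A →ₗ[𝕜] R) : Prop :=
  ∀ a b, d (a * b) = d a * σ b + σ a * d b

def cutCorner (p e : R) (σ : A →ₗ[𝕜] R) : A →ₗ[𝕜] R :=
  σ - (LinearMap.mulLeftRight 𝕜 (p, e)).comp σ

variable {p e D : R} {σ d : A →ₗ[𝕜] R}

@[simp]
lemma cutCorner_apply (a : A) : cutCorner p e σ a = σ a - p * σ a * e := rfl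

lemma cutCorner_mul_of_mul_eq_zero (hD : e * D = 0) (a : A) :
    cutCorner p e σ a * D = σ a * D := by
  rw [cutCorner_apply, sub_mul, mul_assoc _ e, hD, mul_zero, sub_zero]

lemma mul_cutCorner_of_mul_eq_zero (hD : D * p = 0) (a : A) :
    D * cutCorner p e σ a = D * σ a := by
  rw [cutCorner_apply, mul_sub, ← mul_assoc, ← mul_assoc, hD, zero_mul, zero_mul, sub_zero]

lemma mul_cutCorner_mul (hp : IsIdempotentElem p) (he : IsIdempotentElem e) (a : A) :
    p * cutCorner p e σ a * e = 0 := by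
  rw [cutCorner_apply, mul_sub, sub_mul, ← mul_assoc p, ← mul_assoc p, hp.eq, mul_assoc _ e e,
    he.eq, sub_self]

lemma IsSigmaDerivation.cutCorner (hd : IsSigmaDerivation σ d)
    (hdp : ∀ b, d b * p = 0) (hed : ∀ b, e * d b = 0) :
    IsSigmaDerivation (cutCorner p e σ) d := fun a b => by
  rw [hd, mul_cutCorner_of_mul_eq_zero (hdp a), cutCorner_mul_of_mul_eq_zero (hed b)]

section Topology

variable [TopologicalSpace A] [ContinuousMul A] [TopologicalSpace R] [IsTopologicalRing R]
  {ι : Type*} {l : Filter ι} {v : ι → A}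

lemma IsSigmaDerivation.tendsto_sigma_mul (hd : IsSigmaDerivation σ d) (hdc : Continuous d)
    (hv : Tendsto v l (𝓝 0)) (b : A) : Tendsto (fun i => σ (v i) * d b) l (𝓝 0) := by
  have hd0 := hdc.tendsto' 0 0 (map_zero d)
  have hvb : Tendsto (fun i => v i * b) l (𝓝 0) := by simpa using hv.mul_const b
  have hlim := (hd0.comp hvb).sub ((hd0.comp hv).mul_const (σ b))
  rw [zero_mul, sub_zero] at hlim
  refine hlim.congr fun i => ?_
  rw [Function.comp_apply, Function.comp_apply, hd, add_sub_cancel_left]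

lemma IsSigmaDerivation.tendsto_mul_sigma (hd : IsSigmaDerivation σ d) (hdc : Continuous d)
    (hv : Tendsto v l (𝓝 0)) (b : A) : Tendsto (fun i => d b * σ (v i)) l (𝓝 0) := by
  have hd0 := hdc.tendsto' 0 0 (map_zero d)
  have hbv : Tendsto (fun i => b * v i) l (𝓝 0) := by simpa using hv.const_mul b
  have hlim := (hd0.comp hbv).sub ((hd0.comp hv).const_mul (σ b))
  rw [mul_zero, sub_zero] at hlim
  refine hlim.congr fun i => ?_
  rw [Function.comp_apply, Function.comp_apply, hd, add_sub_cancel_right]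

end Topology

end Algebra

theorem LinearMap.continuous_of_seq_closed_graph_zero {𝕜 E F : Type*} [NontriviallyNormedField 𝕜]
    [NormedAddCommGroup E] [NormedSpace 𝕜 E] [CompleteSpace E]
    [NormedAddCommGroup F] [NormedSpace 𝕜 F] [CompleteSpace F] (g : E →ₗ[𝕜] F)
    (hg : ∀ (u : ℕ → E) (y : F), Tendsto u atTop (𝓝 0) → Tendsto (g ∘ u) atTop (𝓝 y) → y = 0) :
    Continuous g := by
  refine g.continuous_of_seq_closed_graph fun u x y hu hgu => sub_eq_zero.mp ?_
  refine hg (fun n => u n - x) (y - g x) (by simpa using hu.sub_const x) ?_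
  simpa [Function.comp_def] using hgu.sub_const (g x)

theorem IsSigmaDerivation.continuous_cutCorner {𝕜 A R : Type*} [NontriviallyNormedField 𝕜]
    [NonUnitalNormedRing A] [NormedSpace 𝕜 A] [CompleteSpace A]
    [NormedRing R] [NormedAlgebra 𝕜 R] [CompleteSpace R]
    {σ d : A →ₗ[𝕜] R} (hd : IsSigmaDerivation σ d) (hdc : Continuous d)
    {p e : R} (hp : IsIdempotentElem p) (he : IsIdempotentElem e)
    (hdp : ∀ b, d b * p = 0) (hed : ∀ b, e * d b = 0)
    (hp_left : ∀ T, (∀ b, d b * T = 0) → p * T = T)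
    (he_right : ∀ T, (∀ b, T * d b = 0) → T * e = T) :
    Continuous (_root_.cutCorner p e σ) := by
  refine (_root_.cutCorner p e σ).continuous_of_seq_closed_graph_zero fun v T hv hT => ?_
  have hTd : ∀ b, T * d b = 0 := fun b => tendsto_nhds_unique (hT.mul_const (d b)) <| by
    simpa only [Function.comp_def, cutCorner_mul_of_mul_eq_zero (hed b)]
      using hd.tendsto_sigma_mul hdc hv b
  have hdT : ∀ b, d b * T = 0 := fun b => tendsto_nhds_unique (hT.const_mul (d b)) <| by
    simpa only [Function.comp_def, mul_cutCorner_of_mul_eq_zero (hdp b)]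
      using hd.tendsto_mul_sigma hdc hv b
  have hpTe : p * T * e = 0 := tendsto_nhds_unique ((hT.const_mul p).mul_const e) <| by
    simp only [Function.comp_apply, mul_cutCorner_mul hp he, tendsto_const_nhds]
  calc T = p * T * e := by rw [mul_assoc, he_right T hTd, hp_left T hdT]
    _ = 0 := hpTe

namespace Submodule

variable {𝕜 H : Type*} [RCLike 𝕜] [NormedAddCommGroup H] [InnerProductSpace 𝕜 H]
  (K : Submodule 𝕜 H) [K.HasOrthogonalProjection] {T : H →L[𝕜] H}

lemma starProjection_mul_of_range_le (h : LinearMap.range T.toLinearMap ≤ K) :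
    K.starProjection * T = T :=
  ContinuousLinearMap.ext fun x => K.starProjection_eq_self_iff.mpr (h ⟨x, rfl⟩)

lemma mul_starProjection_of_le_ker (h : K ≤ LinearMap.ker T.toLinearMap) :
    T * K.starProjection = 0 :=
  ContinuousLinearMap.ext fun x => h (K.starProjection_apply_mem x)

end Submodule

theorem IsSigmaDerivation.exists_continuous {𝕜 H A : Type*} [RCLike 𝕜]
    [NormedAddCommGroup H] [InnerProductSpace 𝕜 H] [CompleteSpace H]
    [NonUnitalNormedRing A] [NormedSpace 𝕜 A] [CompleteSpace A]
    {σ d : A →ₗ[𝕜] (H →L[𝕜] H)} (hd : IsSigmaDerivation σ d) (hdc : Continuous d) :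
    ∃ Sig : A →ₗ[𝕜] (H →L[𝕜] H), Continuous Sig ∧ IsSigmaDerivation Sig d := by
  let N : Submodule 𝕜 H := ⨅ b, LinearMap.ker (d b).toLinearMap
  let M : Submodule 𝕜 H := (⨆ b, LinearMap.range (d b).toLinearMap).topologicalClosure
  have hN : IsClosed (N : Set H) := by
    simpa only [N, Submodule.coe_iInf] using isClosed_iInter fun b => (d b).isClosed_ker
  have : CompleteSpace N := hN.completeSpace_coe
  have : CompleteSpace M := Submodule.isClosed_topologicalClosure _ |>.completeSpace_coe
  have range_le_M (b : A) : LinearMap.range (d b).toLinearMap ≤ M :=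
    (le_iSup (fun b => LinearMap.range (d b).toLinearMap) b).trans
      (Submodule.le_topologicalClosure _)
  have hdp (b : A) : d b * N.starProjection = 0 := N.mul_starProjection_of_le_ker (iInf_le _ b)
  have hed (b : A) : (1 - M.starProjection) * d b = 0 := by
    rw [sub_mul, one_mul, M.starProjection_mul_of_range_le (range_le_M b), sub_self]
  refine ⟨_root_.cutCorner N.starProjection (1 - M.starProjection) σ, ?_, hd.cutCorner hdp hed⟩
  refine hd.continuous_cutCorner hdc N.isIdempotentElem_starProjection
    M.isIdempotentElem_starProjection.one_sub hdp hed (fun T hT => ?_) (fun T hT => ?_)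
  · refine N.starProjection_mul_of_range_le (le_iInf fun b => ?_)
    rintro _ ⟨x, rfl⟩
    exact congr($(hT b) x)
  · have hM : M ≤ LinearMap.ker T.toLinearMap := by
      refine Submodule.topologicalClosure_minimal _ (iSup_le fun b => ?_) T.isClosed_ker
      rintro _ ⟨x, rfl⟩
      exact congr($(hT b) x)
    rw [mul_sub, mul_one, M.mul_starProjection_of_le_ker hM, sub_zero]

theorem stmt_8_general {H : Type*} [NormedAddCommGroup H] [InnerProductSpace ℂ H]
    [CompleteSpace H]
    (𝔄 : NonUnitalStarSubalgebra ℂ (H →L[ℂ] H))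
    (hcl : IsClosed (𝔄 : Set (H →L[ℂ] H)))
    (σ d : 𝔄 →ₗ[ℂ] (H →L[ℂ] H))
    (hd_cont : Continuous d)
    (hd : ∀ A B : 𝔄, d (A * B) = d A * σ B + σ A * d B) :
    ∃ Sig : 𝔄 →ₗ[ℂ] (H →L[ℂ] H), Continuous Sig ∧
      (∀ A B : 𝔄, d (A * B) = d A * Sig B + Sig A * d B) := by
  have : CompleteSpace 𝔄 := hcl.completeSpace_coe
  exact IsSigmaDerivation.exists_continuous hd hd_cont

/-- **Theorem 3.3.** Let `𝔄` be a C*-algebra acting on a Hilbert space `H`,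
`σ : 𝔄 → B(H)` a `*`-linear map and `d : 𝔄 → B(H)` a continuous `σ`-derivation.
Then there is a continuous linear map `Σ : 𝔄 → B(H)` such that `d` is a
`Σ`-derivation. -/
theorem stmt_8 {H : Type*} [NormedAddCommGroup H] [InnerProductSpace ℂ H]
    [CompleteSpace H]
    (𝔄 : NonUnitalStarSubalgebra ℂ (H →L[ℂ] H))
    (hcl : IsClosed (𝔄 : Set (H →L[ℂ] H)))
    (σ d : 𝔄 →ₗ[ℂ] (H →L[ℂ] H))
    (hσ_star : ∀ A : 𝔄, σ (star A) = star (σ A))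
    (hd_cont : Continuous d)
    (hd : ∀ A B : 𝔄, d (A * B) = d A * σ B + σ A * d B) :
    ∃ Sig : 𝔄 →ₗ[ℂ] (H →L[ℂ] H), Continuous Sig ∧
      (∀ A B : 𝔄, d (A * B) = d A * Sig B + Sig A * d B) :=
  stmt_8_general 𝔄 hcl σ d hd_cont hd
end

section
/- Let H be a complex Hilbert space, 𝔄 a C*-algebra acting on H, σ : 𝔄 → B(H) a linear map, and d : 𝔄 → B(H) a σ-derivation. Let K = ⋂_{B,C ∈ 𝔄} ker(σ(BC) − σ(B)σ(C)) ⊆ H. Then K is invariant under d(A) for every A ∈ 𝔄, i.e., d(A)(K) ⊆ K. -/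
/-- **From the proof of Proposition 3.4.** Let `𝔄` be a C*-algebra acting on a
Hilbert space `H`, `σ : 𝔄 → B(H)` a linear map and `d : 𝔄 → B(H)` a `σ`-derivation.
Then `K = ⋂_{B,C ∈ 𝔄} ker(σ(BC) − σ(B)σ(C))` is invariant under `d(A)` for every
`A ∈ 𝔄`. -/
theorem stmt_10 {H : Type*} [NormedAddCommGroup H] [InnerProductSpace ℂ H]
    [CompleteSpace H]
    (𝔄 : NonUnitalStarSubalgebra ℂ (H →L[ℂ] H))
    (hcl : IsClosed (𝔄 : Set (H →L[ℂ] H)))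
    (σ d : 𝔄 →ₗ[ℂ] (H →L[ℂ] H))
    (hd : ∀ A B : 𝔄, d (A * B) = d A * σ B + σ A * d B)
    (K : Set H)
    (hK : K = ⋂ (B : 𝔄) (C : 𝔄), {h : H | (σ (B * C) - σ B * σ C) h = 0}) :
    ∀ A : 𝔄, d A '' K ⊆ K := by
  intro A y hy
  obtain ⟨x, hx, rfl⟩ := hy
  subst hK
  simp only [Set.mem_iInter, Set.mem_setOf_eq] at hx ⊢
  intro B C
  have key : (σ (B * C) - σ B * σ C) * d A = d B * (σ (C * A) - σ C * σ A) := by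
    have h1 := hd (B * C) A
    have h2 := hd B (C * A)
    rw [← mul_assoc] at h2
    rw [hd B C] at h1
    rw [hd C A] at h2
    rw [h1] at h2
    have h3 : σ (B * C) * d A - σ B * σ C * d A
        = d B * σ (C * A) - d B * (σ C * σ A) := by
      have h2' := h2
      simp only [add_mul, mul_add, mul_assoc] at h2' ⊢
      -- h2' : dB*σC*σA + σB*dC*σA + σ(BC)*dA = dB*σ(CA) + σB*dC*σA + σB*σC*dA
      -- goal follows by abelian group manipulation
      linear_combination (norm := noncomm_ring) h2'
    calc (σ (B * C) - σ B * σ C) * d A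
        = σ (B * C) * d A - σ B * σ C * d A := by rw [sub_mul]
      _ = d B * σ (C * A) - d B * (σ C * σ A) := h3
      _ = d B * (σ (C * A) - σ C * σ A) := by rw [mul_sub]
  have := congrArg (fun T : H →L[ℂ] H => T x) key
  simp only [ContinuousLinearMap.mul_apply] at this
  rw [this, hx C A, map_zero]
end

section
/- Let H be a complex Hilbert space, 𝔄 a C*-algebra acting on H, σ : 𝔄 → B(H) a continuous *-linear map, and d : 𝔄 → B(H) a σ-derivation. Then there exist a continuous *-homomorphism Σ : 𝔄 → B(H) (linear, multiplicative, and satisfying Σ(A*) = Σ(A)*) and a Σ-derivation D : 𝔄 → B(H) such that D is continuous if and only if d is continuous; moreover, if d(A*) = d(A)* for all A ∈ 𝔄, then D(A*) = D(A)* for all A ∈ 𝔄. -/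
/-!
Write `Φ(A, B) = σ(AB) - σ(A)σ(B)`. The derivation rule gives `Φ(A, B) d(C) = d(A) Φ(B, C)`, and
`σ(A) Φ(B, C)` is a combination of defects, so the closed span `K` of the ranges of all `Φ(A, B)` is
invariant under every `σ(A)` and `d(A)`; as `σ` is `*`-linear, `K` even reduces every `σ(A)`.
With `P` the projection onto `K` and `Q = 1 - P`, `Σ = Qσ` is a `*`-homomorphism because `QΦ = 0`,
and `D = QdQ` is a `Σ`-derivation. Finally `d = D + Pd`, and `Pd` is automatically continuous by
the closed graph theorem: `Φ(A, B)* P d(C) = d(B*) Φ(A*, C)` is continuous in `C`, and the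
operators `Φ(A, B)*` separate operators with range in `K`.
-/

open Module.End

section MulDefect

variable {S R : Type*} [Semigroup S] [Ring R]

def mulDefect (σ : S → R) (a b : S) : R := σ (a * b) - σ a * σ b

theorem mul_mulDefect (σ : S → R) (a b c : S) :
    σ a * mulDefect σ b c =
      mulDefect σ (a * b) c + mulDefect σ a b * σ c - mulDefect σ a (b * c) := by
  simp only [mulDefect, sub_mul, mul_sub, mul_assoc]
  abel

variable {σ d : S → R}

theorem mulDefect_mul_eq_mul_mulDefect (hd : ∀ a b, d (a * b) = d a * σ b + σ a * d b)
    (a b c : S) : mulDefect σ a b * d c = d a * mulDefect σ b c := by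
  have h := hd (a * b) c
  rw [mul_assoc, hd a (b * c), hd a b, hd b c] at h
  simp only [mulDefect, sub_mul, mul_sub, add_mul, mul_add, ← mul_assoc] at h ⊢
  linear_combination (norm := abel) -h

theorem star_mulDefect [StarMul S] [StarRing R] (hσ : ∀ a, σ (star a) = star (σ a)) (a b : S) :
    star (mulDefect σ a b) = mulDefect σ (star b) (star a) := by
  rw [mulDefect, mulDefect, star_sub, star_mul, ← hσ, ← hσ, ← hσ, star_mul]

theorem Continuous.mulDefect_right [TopologicalSpace S] [ContinuousMul S] [TopologicalSpace R]
    [IsTopologicalRing R] (hσ : Continuous σ) (a : S) : Continuous (mulDefect σ a) :=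
  (hσ.comp (continuous_const_mul a)).sub (continuous_const.mul hσ)

end MulDefect

section Compression

variable {S R : Type*} [Semigroup S] [Ring R] {σ d : S → R} {q : R}

theorem IsIdempotentElem.mul_map_mul (hq : IsIdempotentElem q) (hqσ : ∀ a, Commute q (σ a))
    (hqΦ : ∀ a b, q * mulDefect σ a b = 0) (a b : S) :
    q * σ (a * b) = q * σ a * (q * σ b) := by
  have h := hqΦ a b
  rw [mulDefect, mul_sub, sub_eq_zero] at h
  rw [h]
  simp only [← mul_assoc]
  rw [mul_assoc q (σ a) q, ← (hqσ a).eq, ← mul_assoc, hq.eq]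

theorem IsIdempotentElem.mul_derivation_mul (hq : IsIdempotentElem q)
    (hqσ : ∀ a, Commute q (σ a)) (hd : ∀ a b, d (a * b) = d a * σ b + σ a * d b) (a b : S) :
    q * d (a * b) * q = q * d a * q * (q * σ b) + q * σ a * (q * d b * q) := by
  have e1 : q * d a * q * (q * σ b) = q * (d a * σ b) * q := by
    rw [mul_assoc _ q, ← mul_assoc q q, hq.eq, (hqσ b).eq]
    simp only [mul_assoc]
  have e2 : q * σ a * (q * d b * q) = q * (σ a * d b) * q := by
    rw [← mul_assoc, ← mul_assoc, mul_assoc q, ← (hqσ a).eq, ← mul_assoc, hq.eq]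
    simp only [mul_assoc]
  rw [e1, e2, hd, mul_add, add_mul]

theorem one_sub_mul_mul_one_sub_add_mul {p t : R} (h : p * t * p = t * p) :
    (1 - p) * t * (1 - p) + p * t = t := by
  simp only [sub_mul, mul_sub, one_mul, mul_one, h]
  abel

theorem IsStarProjection.commute_of_mul_mul_eq [StarRing R] {p t : R}
    (hp : IsStarProjection p) (ht : p * t * p = t * p) (ht' : p * star t * p = star t * p) :
    Commute p t :=
  calc p * t = star (star t * p) := by rw [star_mul, star_star, hp.isSelfAdjoint.star_eq]
    _ = star (p * star t * p) := by rw [ht']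
    _ = p * t * p := by rw [star_mul, star_mul, star_star, hp.isSelfAdjoint.star_eq, mul_assoc]
    _ = t * p := ht

end Compression

theorem iSup_range_mem_invtSubmodule {R M ι : Type*} [Semiring R] [AddCommMonoid M] [Module R M]
    (f : ι → M →ₗ[R] M) {T : M →ₗ[R] M} (hT : ∀ i x, T (f i x) ∈ ⨆ i, LinearMap.range (f i)) :
    (⨆ i, LinearMap.range (f i)) ∈ invtSubmodule T := by
  rw [mem_invtSubmodule_iff_map_le, Submodule.map_iSup]
  refine iSup_le fun i => ?_
  rintro _ ⟨_, ⟨x, rfl⟩, rfl⟩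
  exact hT i x

theorem LinearMap.continuous_of_injOn_of_continuous_comp {𝕜 E F G : Type*}
    [NontriviallyNormedField 𝕜] [NormedAddCommGroup E] [NormedSpace 𝕜 E] [CompleteSpace E]
    [NormedAddCommGroup F] [NormedSpace 𝕜 F] [CompleteSpace F] [TopologicalSpace G] [T2Space G]
    (f : E →ₗ[𝕜] F) {s : Set F} (hs : IsClosed s) (hfs : ∀ x, f x ∈ s) {g : F → G}
    (hg : Continuous g) (hinj : s.InjOn g) (hgf : Continuous (g ∘ f)) : Continuous f := by
  refine f.continuous_of_seq_closed_graph fun u x y hu hfu =>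
    hinj (hs.mem_of_tendsto hfu (.of_forall fun n => hfs (u n))) (hfs x) ?_
  exact tendsto_nhds_unique ((hg.tendsto y).comp hfu) ((hgf.tendsto x).comp hu)

section Projection

variable {𝕜 E F : Type*} [RCLike 𝕜] [NormedAddCommGroup E] [InnerProductSpace 𝕜 E]
  [NormedAddCommGroup F] [InnerProductSpace 𝕜 F]

theorem ContinuousLinearMap.eq_zero_of_mem_closure_iSup_range [CompleteSpace E] [CompleteSpace F]
    {ι : Type*} (f : ι → E →L[𝕜] F) {v : F} (hv : v ∈ (⨆ i, (f i).range).topologicalClosure)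
    (h : ∀ i, ContinuousLinearMap.adjoint (f i) v = 0) : v = 0 := by
  have hv' : v ∈ (⨆ i, (f i).range).topologicalClosureᗮ := by
    rw [Submodule.orthogonal_closure, ← Submodule.iInf_orthogonal, Submodule.mem_iInf]
    intro i
    rw [ContinuousLinearMap.orthogonal_range]
    exact h i
  simpa using (Submodule.inf_orthogonal_eq_bot _).le ⟨hv, hv'⟩

theorem Submodule.starProjection_mul_eq_self (K : Submodule 𝕜 E) [K.HasOrthogonalProjection]
    {T : E →L[𝕜] E} (h : ∀ x, T x ∈ K) : K.starProjection * T = T :=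
  ContinuousLinearMap.ext fun x => K.starProjection_eq_self_iff.mpr (h x)

theorem Submodule.starProjection_mul_mul_eq (K : Submodule 𝕜 E) [K.HasOrthogonalProjection]
    {T : E →L[𝕜] E} (h : K ∈ invtSubmodule (T : E →ₗ[𝕜] E)) :
    K.starProjection * T * K.starProjection = T * K.starProjection :=
  ContinuousLinearMap.IsIdempotentElem.conj_eq_of_range_mem_invtSubmodule
    K.isIdempotentElem_starProjection (by rwa [Submodule.range_starProjection])

end Projection

section DefectSpace

variable {H A : Type*} [NormedAddCommGroup H] [InnerProductSpace ℂ H]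

section Semigroup

variable [Semigroup A]

def defectSpace (σ : A → H →L[ℂ] H) : Submodule ℂ H :=
  (⨆ p : A × A, (mulDefect σ p.1 p.2).range).topologicalClosure

variable {σ d : A → H →L[ℂ] H}

theorem mulDefect_apply_mem_iSup_range (a b : A) (x : H) :
    mulDefect σ a b x ∈ ⨆ p : A × A, (mulDefect σ p.1 p.2).range :=
  Submodule.mem_iSup_of_mem (a, b) (LinearMap.mem_range_self _ x)

theorem mulDefect_apply_mem_defectSpace (a b : A) (x : H) : mulDefect σ a b x ∈ defectSpace σ :=
  Submodule.le_topologicalClosure _ (mulDefect_apply_mem_iSup_range a b x)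

theorem defectSpace_mem_invtSubmodule_of_apply_mem {T : H →L[ℂ] H}
    (hT : ∀ a b x, T (mulDefect σ a b x) ∈ ⨆ p : A × A, (mulDefect σ p.1 p.2).range) :
    defectSpace σ ∈ invtSubmodule (T : H →ₗ[ℂ] H) :=
  Submodule.topologicalClosure_mem_invtSubmodule <| iSup_range_mem_invtSubmodule
    (fun p : A × A => ((mulDefect σ p.1 p.2 : H →L[ℂ] H) : H →ₗ[ℂ] H)) fun p x => hT p.1 p.2 x

theorem defectSpace_mem_invtSubmodule (a : A) :
    defectSpace σ ∈ invtSubmodule (σ a : H →ₗ[ℂ] H) := by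
  refine defectSpace_mem_invtSubmodule_of_apply_mem fun b c x => ?_
  have h := congr($(mul_mulDefect σ a b c) x)
  simp only [mul_apply_eq_comp, add_apply, sub_apply] at h
  rw [h]
  exact sub_mem (add_mem (mulDefect_apply_mem_iSup_range _ _ _)
    (mulDefect_apply_mem_iSup_range _ _ _)) (mulDefect_apply_mem_iSup_range _ _ _)

theorem defectSpace_mem_invtSubmodule_of_derivation
    (hd : ∀ a b, d (a * b) = d a * σ b + σ a * d b) (a : A) :
    defectSpace σ ∈ invtSubmodule (d a : H →ₗ[ℂ] H) := by
  refine defectSpace_mem_invtSubmodule_of_apply_mem fun b c x => ?_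
  have h := congr($(mulDefect_mul_eq_mul_mulDefect hd a b c) x)
  simp only [mul_apply_eq_comp] at h
  rw [← h]
  exact mulDefect_apply_mem_iSup_range _ _ _

variable [CompleteSpace H]

instance (σ : A → H →L[ℂ] H) : CompleteSpace (defectSpace σ) :=
  (Submodule.isClosed_topologicalClosure _).completeSpace_coe

theorem starProjection_defectSpace_mul_mulDefect (a b : A) :
    (defectSpace σ).starProjection * mulDefect σ a b = mulDefect σ a b :=
  Submodule.starProjection_mul_eq_self _ (mulDefect_apply_mem_defectSpace a b)

theorem commute_starProjection_defectSpace [StarMul A] (hσ : ∀ a, σ (star a) = star (σ a))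
    (a : A) : Commute (defectSpace σ).starProjection (σ a) :=
  isStarProjection_starProjection.commute_of_mul_mul_eq
    (Submodule.starProjection_mul_mul_eq _ (defectSpace_mem_invtSubmodule a))
    (hσ a ▸ Submodule.starProjection_mul_mul_eq _ (defectSpace_mem_invtSubmodule (star a)))

theorem eq_of_starProjection_defectSpace_mul_eq {T₁ T₂ : H →L[ℂ] H}
    (h₁ : (defectSpace σ).starProjection * T₁ = T₁)
    (h₂ : (defectSpace σ).starProjection * T₂ = T₂)
    (h : ∀ a b, star (mulDefect σ a b) * T₁ = star (mulDefect σ a b) * T₂) : T₁ = T₂ := by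
  rw [← sub_eq_zero]
  ext x
  refine ContinuousLinearMap.eq_zero_of_mem_closure_iSup_range
    (fun p : A × A => mulDefect σ p.1 p.2) ?_ fun p => ?_
  · have hx : (defectSpace σ).starProjection ((T₁ - T₂) x) = (T₁ - T₂) x := by
      rw [← mul_apply_eq_comp, mul_sub, h₁, h₂]
    rw [← hx]
    exact (defectSpace σ).starProjection_apply_mem _
  · rw [← ContinuousLinearMap.star_eq_adjoint, ← mul_apply_eq_comp, mul_sub, h, sub_self,
      zero_apply]

end Semigroup

theorem continuous_starProjection_defectSpace_mul [CompleteSpace H] [NonUnitalNormedRing A]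
    [StarRing A] [NormedSpace ℂ A] [CompleteSpace A] {σ d : A →ₗ[ℂ] H →L[ℂ] H} (hσ : Continuous σ)
    (hσ_star : ∀ a, σ (star a) = star (σ a)) (hd : ∀ a b, d (a * b) = d a * σ b + σ a * d b) :
    Continuous fun a => (defectSpace σ).starProjection * d a := by
  set P := (defectSpace σ).starProjection
  have hP : IsStarProjection P := isStarProjection_starProjection
  have hΦP : ∀ a b, star (mulDefect σ a b) * P = star (mulDefect σ a b) := fun a b => by
    rw [← hP.isSelfAdjoint.star_eq, ← star_mul, starProjection_defectSpace_mul_mulDefect]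
  refine (LinearMap.mulLeft ℂ P ∘ₗ d).continuous_of_injOn_of_continuous_comp
    (s := {T | P * T = T}) (isClosed_eq (continuous_const_mul P) continuous_id)
    (fun a => show P * (P * d a) = P * d a by rw [← mul_assoc, hP.isIdempotentElem.eq])
    (g := fun T (p : A × A) => star (mulDefect σ p.1 p.2) * T)
    (continuous_pi fun p => continuous_const_mul _) ?_ ?_
  · exact fun T₁ h₁ T₂ h₂ h =>
      eq_of_starProjection_defectSpace_mul_eq h₁ h₂ fun a b => congrFun h (a, b)
  · refine continuous_pi fun ⟨a, b⟩ =>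
      ((continuous_const (y := d (star b))).mul (hσ.mulDefect_right (star a))).congr fun c => ?_
    simp only [Function.comp_apply, LinearMap.comp_apply, LinearMap.mulLeft_apply, Pi.mul_apply]
    rw [← mul_assoc, hΦP, star_mulDefect hσ_star, mulDefect_mul_eq_mul_mulDefect hd]

end DefectSpace

/-- **Proposition 3.4.** Let `𝔄` be a C*-algebra acting on a Hilbert space `H`,
`σ : 𝔄 → B(H)` a continuous `*`-linear map and `d : 𝔄 → B(H)` a `σ`-derivation.
Then there exist a continuous `*`-homomorphism `Σ : 𝔄 → B(H)` and a `Σ`-derivation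
`D : 𝔄 → B(H)` such that `D` is continuous iff `d` is; moreover if `d` preserves `*`,
so does `D`. -/
theorem stmt_11 {H : Type*} [NormedAddCommGroup H] [InnerProductSpace ℂ H]
    [CompleteSpace H]
    (𝔄 : NonUnitalStarSubalgebra ℂ (H →L[ℂ] H))
    (hcl : IsClosed (𝔄 : Set (H →L[ℂ] H)))
    (σ d : 𝔄 →ₗ[ℂ] (H →L[ℂ] H))
    (hσ_cont : Continuous σ)
    (hσ_star : ∀ A : 𝔄, σ (star A) = star (σ A))
    (hd : ∀ A B : 𝔄, d (A * B) = d A * σ B + σ A * d B) :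
    ∃ Sig D : 𝔄 →ₗ[ℂ] (H →L[ℂ] H),
      Continuous Sig ∧
      (∀ A B : 𝔄, Sig (A * B) = Sig A * Sig B) ∧
      (∀ A : 𝔄, Sig (star A) = star (Sig A)) ∧
      (∀ A B : 𝔄, D (A * B) = D A * Sig B + Sig A * D B) ∧
      (Continuous D ↔ Continuous d) ∧
      ((∀ A : 𝔄, d (star A) = star (d A)) → ∀ A : 𝔄, D (star A) = star (D A)) := by
  have : CompleteSpace 𝔄 := hcl.completeSpace_coe
  set P := (defectSpace σ).starProjection
  set Q := 1 - P
  have hQ : IsStarProjection Q := isStarProjection_starProjection.one_sub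
  have hQσ : ∀ A, Commute Q (σ A) := fun A =>
    (Commute.one_left _).sub_left (commute_starProjection_defectSpace hσ_star A)
  have hQΦ : ∀ A B, Q * mulDefect σ A B = 0 := fun A B => by
    rw [sub_mul, one_mul, starProjection_defectSpace_mul_mulDefect, sub_self]
  have hd_decomp : ∀ A, Q * d A * Q + P * d A = d A := fun A =>
    one_sub_mul_mul_one_sub_add_mul <| Submodule.starProjection_mul_mul_eq _
      (defectSpace_mem_invtSubmodule_of_derivation hd A)
  refine ⟨LinearMap.mulLeft ℂ Q ∘ₗ σ, LinearMap.mulLeftRight ℂ (Q, Q) ∘ₗ d,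
    (continuous_const_mul Q).comp hσ_cont, hQ.isIdempotentElem.mul_map_mul hQσ hQΦ,
    fun A => ?_, hQ.isIdempotentElem.mul_derivation_mul hQσ hd,
    ⟨fun hD => ?_, fun hd_cont => ?_⟩, fun hd_star A => ?_⟩
  · show Q * σ (star A) = star (Q * σ A)
    rw [star_mul, hQ.isSelfAdjoint.star_eq, ← hσ_star, (hQσ _).eq]
  · exact (hD.add (continuous_starProjection_defectSpace_mul hσ_cont hσ_star hd)).congr
      hd_decomp
  · exact (continuous_mul_const Q).comp ((continuous_const_mul Q).comp hd_cont)
  · show Q * d (star A) * Q = star (Q * d A * Q)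
    rw [hd_star, star_mul, star_mul, hQ.isSelfAdjoint.star_eq, mul_assoc]
end

section
/- Let 𝔄 be a *-subalgebra of a complex *-algebra 𝔅, let σ, τ : 𝔄 → 𝔅 be *-linear maps, and let d : 𝔄 → 𝔅 be a *-(σ,τ)-derivation. Then d is also a *-(τ,σ)-derivation, i.e., d(ab) = d(a)τ(b) + σ(a)d(b) for all a, b ∈ 𝔄. -/
/-- **From the proof of Theorem 4.1.** Let `𝔄` be a `*`-subalgebra of a complex
`*`-algebra `𝔅`, `σ τ : 𝔄 → 𝔅` be `*`-linear maps and `d : 𝔄 → 𝔅` a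
`*`-`(σ,τ)`-derivation. Then `d` is a `*`-`(τ,σ)`-derivation. -/
theorem stmt_15 {B : Type*} [NonUnitalRing B] [Module ℂ B]
    [SMulCommClass ℂ B B] [IsScalarTower ℂ B B] [StarRing B] [StarModule ℂ B]
    (𝔄 : NonUnitalStarSubalgebra ℂ B)
    (σ τ d : 𝔄 →ₗ[ℂ] B)
    (hσ : ∀ a : 𝔄, σ (star a) = star (σ a))
    (hτ : ∀ a : 𝔄, τ (star a) = star (τ a))
    (hd_star : ∀ a : 𝔄, d (star a) = star (d a))
    (hd : ∀ a b : 𝔄, d (a * b) = d a * σ b + τ a * d b)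
    (a b : 𝔄) :
    d (a * b) = d a * τ b + σ a * d b := by
  have h1 : d (a * b) = star (d (star (a * b))) := by rw [hd_star, star_star]
  rw [h1, star_mul, hd, star_add, star_mul, star_mul, ← hσ, ← hd_star, ← hτ, ← hd_star]
  simp only [star_star]
  exact add_comm _ _
end

section
/- Let 𝔄 be a *-subalgebra of a complex *-algebra 𝔅, let σ, τ : 𝔄 → 𝔅 be *-linear maps, and let d : 𝔄 → 𝔅 be a *-(σ,τ)-derivation. Then d is a *-((σ+τ)/2, (σ+τ)/2)-derivation, i.e., setting μ = (σ+τ)/2, one has d(ab) = d(a)μ(b) + μ(a)d(b) for all a, b ∈ 𝔄 and d(a*) = d(a)* for all a ∈ 𝔄. -/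
/-- **Theorem 4.1.** Let `𝔄` be a `*`-subalgebra of a complex `*`-algebra `𝔅`,
`σ τ : 𝔄 → 𝔅` be `*`-linear maps and `d : 𝔄 → 𝔅` a `*`-`(σ,τ)`-derivation. Then `d`
is a `*`-`((σ+τ)/2, (σ+τ)/2)`-derivation. -/
theorem stmt_16 {B : Type*} [NonUnitalRing B] [Module ℂ B]
    [SMulCommClass ℂ B B] [IsScalarTower ℂ B B] [StarRing B] [StarModule ℂ B]
    (𝔄 : NonUnitalStarSubalgebra ℂ B)
    (σ τ d : 𝔄 →ₗ[ℂ] B)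
    (hσ : ∀ a : 𝔄, σ (star a) = star (σ a))
    (hτ : ∀ a : 𝔄, τ (star a) = star (τ a))
    (hd_star : ∀ a : 𝔄, d (star a) = star (d a))
    (hd : ∀ a b : 𝔄, d (a * b) = d a * σ b + τ a * d b) :
    (∀ a b : 𝔄, d (a * b) =
        d a * ((1 / 2 : ℂ) • (σ b + τ b)) + ((1 / 2 : ℂ) • (σ a + τ a)) * d b) ∧
      (∀ a : 𝔄, d (star a) = star (d a)) := by
  have key : ∀ a b : 𝔄, d (a * b) = d a * τ b + σ a * d b := by
    intro a b
    have h1 : d (a * b) = star (d (star b * star a)) := by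
      rw [← star_mul, hd_star, star_star]
    rw [hd (star b) (star a), star_add, star_mul, star_mul, hσ, hτ, hd_star, hd_star,
      star_star, star_star, star_star, star_star] at h1
    rw [h1]; exact add_comm _ _
  constructor
  · intro a b
    have h1 := hd a b
    have h2 := key a b
    have : (2 : ℂ) • d (a * b) =
        (2 : ℂ) • (d a * ((1 / 2 : ℂ) • (σ b + τ b)) + ((1 / 2 : ℂ) • (σ a + τ a)) * d b) := by
      rw [smul_add, mul_smul_comm, smul_mul_assoc, smul_smul, smul_smul]
      norm_num
      rw [mul_add, add_mul]
      rw [two_smul]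
      nth_rewrite 1 [h1]
      nth_rewrite 1 [h2]
      abel
    have h2ne : (2 : ℂ) ≠ 0 := by norm_num
    exact smul_right_injective B h2ne this
  · exact hd_star
end

section
/- Let H be a complex Hilbert space, 𝔄 a C*-algebra acting on H, σ, τ : 𝔄 → B(H) continuous *-linear maps, and d : 𝔄 → B(H) a continuous *-(σ,τ)-derivation. Then there exists a continuous linear map Σ : 𝔄 → B(H) such that d is a *-Σ-derivation, i.e., d(AB) = d(A)Σ(B) + Σ(A)d(B) for all A, B ∈ 𝔄 and d(A*) = d(A)* for all A ∈ 𝔄. -/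
/-- **Theorem 4.2.** Let `𝔄` be a C*-algebra acting on a Hilbert space `H`,
`σ τ : 𝔄 → B(H)` continuous `*`-linear maps and `d : 𝔄 → B(H)` a continuous
`*`-`(σ,τ)`-derivation. Then there is a continuous linear map `Σ : 𝔄 → B(H)` such
that `d` is a `*`-`Σ`-derivation. -/
theorem stmt_17 {H : Type*} [NormedAddCommGroup H] [InnerProductSpace ℂ H]
    [CompleteSpace H]
    (𝔄 : NonUnitalStarSubalgebra ℂ (H →L[ℂ] H))
    (hcl : IsClosed (𝔄 : Set (H →L[ℂ] H)))
    (σ τ d : 𝔄 →ₗ[ℂ] (H →L[ℂ] H))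
    (hσ_cont : Continuous σ) (hσ_star : ∀ A : 𝔄, σ (star A) = star (σ A))
    (hτ_cont : Continuous τ) (hτ_star : ∀ A : 𝔄, τ (star A) = star (τ A))
    (hd_cont : Continuous d)
    (hd_star : ∀ A : 𝔄, d (star A) = star (d A))
    (hd : ∀ A B : 𝔄, d (A * B) = d A * σ B + τ A * d B) :
    ∃ Sig : 𝔄 →ₗ[ℂ] (H →L[ℂ] H), Continuous Sig ∧
      (∀ A B : 𝔄, d (A * B) = d A * Sig B + Sig A * d B) ∧
      (∀ A : 𝔄, d (star A) = star (d A)) := by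
  -- the "reflected" derivation identity obtained by taking adjoints
  have h2 : ∀ A B : 𝔄, d (A * B) = σ A * d B + d A * τ B := by
    intro A B
    have h := congrArg star (hd (star B) (star A))
    rw [← star_mul, hd_star, star_star] at h
    rw [h, star_add, star_mul, star_mul, hd_star, hσ_star, hτ_star, hd_star,
      star_star, star_star, star_star, star_star]
  refine ⟨(2⁻¹ : ℂ) • (σ + τ), ?_, ?_, hd_star⟩
  · exact (hσ_cont.add hτ_cont).const_smul (2⁻¹ : ℂ)
  · intro A B
    have key : d (A * B) = (2⁻¹ : ℂ) • (d A * σ B + τ A * d B) +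
        (2⁻¹ : ℂ) • (σ A * d B + d A * τ B) := by
      rw [← hd A B, ← h2 A B, ← add_smul]
      norm_num
    rw [key]
    simp only [LinearMap.smul_apply, LinearMap.add_apply, smul_add, mul_add, add_mul,
      mul_smul_comm, smul_mul_assoc]
    abel
end
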